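/- arXiv:1206.0163 — 4 statements merged into one kernel-verified Lean document; each statement's English description precedes it below -/
import Mathlib

section
/- For all real constants a > b > 0 and all parameters λ₁, λ₂ ∈ ℝ \ {a, b}, the functions K_{λ₁} and K_{λ₂} Poisson commute: {K_{λ₁}, K_{λ₂}}(x, y, ẋ, ẏ) = 0 at every point (x, y, ẋ, ẏ) ∈ ℝ⁴. -/
/-!
Write `L = ẋy − ẏx` for the angular momentum. `K_λ = α ẋ² + β ẏ² − γ L²` with
`α = 1/(a−λ)`, `β = 1/(b−λ)`, `γ = 1/((a−λ)(b−λ))`. Since `{ẋ², ẏ²} = 0` and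
`{ẋ², L²} = −{ẏ², L²} = 4ẋẏL`, the bracket of two such forms is
`4ẋẏL (γ₁(α₂ − β₂) − γ₂(α₁ − β₁))`, and it vanishes because `α − β = (b − a) γ`
for every `λ` of the confocal family.
-/

/-- The function `K_λ` associated with the confocal family with parameters `a > b > 0`. -/
noncomputable def Kfun (a b lam : ℝ) (x y vx vy : ℝ) : ℝ :=
  vx ^ 2 / (a - lam) + vy ^ 2 / (b - lam) - (vx * y - vy * x) ^ 2 / ((a - lam) * (b - lam))

/-- The standard Poisson bracket of two functions of `(x, y, ẋ, ẏ)`. -/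
noncomputable def poissonBracket (f g : ℝ → ℝ → ℝ → ℝ → ℝ) (x y vx vy : ℝ) : ℝ :=
  (deriv (fun t => f t y vx vy) x) * (deriv (fun t => g x y t vy) vx)
  - (deriv (fun t => f x y t vy) vx) * (deriv (fun t => g t y vx vy) x)
  + (deriv (fun t => f x t vx vy) y) * (deriv (fun t => g x y vx t) vy)
  - (deriv (fun t => f x y vx t) vy) * (deriv (fun t => g x t vx vy) y)

def energyMomentumForm (α β γ x y vx vy : ℝ) : ℝ :=
  α * vx ^ 2 + β * vy ^ 2 - γ * (vx * y - vy * x) ^ 2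

section
variable (α β γ x y vx vy : ℝ)

theorem hasDerivAt_energyMomentumForm_x :
    HasDerivAt (fun t => energyMomentumForm α β γ t y vx vy)
      (2 * γ * vy * (vx * y - vy * x)) x := by
  have hL : HasDerivAt (fun t => vx * y - vy * t) (-vy) x := by
    simpa using ((hasDerivAt_id x).const_mul vy).const_sub (vx * y)
  exact (((hL.pow 2).const_mul γ).const_sub (α * vx ^ 2 + β * vy ^ 2)).congr_deriv (by ring)

theorem hasDerivAt_energyMomentumForm_y :
    HasDerivAt (fun t => energyMomentumForm α β γ x t vx vy)
      (-(2 * γ * vx * (vx * y - vy * x))) y := by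
  have hL : HasDerivAt (fun t => vx * t - vy * x) vx y := by
    simpa using ((hasDerivAt_id y).const_mul vx).sub_const (vy * x)
  exact (((hL.pow 2).const_mul γ).const_sub (α * vx ^ 2 + β * vy ^ 2)).congr_deriv (by ring)

theorem hasDerivAt_energyMomentumForm_vx :
    HasDerivAt (fun t => energyMomentumForm α β γ x y t vy)
      (2 * α * vx - 2 * γ * y * (vx * y - vy * x)) vx := by
  have hL : HasDerivAt (fun t => t * y - vy * x) y vx := by
    simpa using ((hasDerivAt_id vx).mul_const y).sub_const (vy * x)
  exact ((((hasDerivAt_pow 2 vx).const_mul α).add_const (β * vy ^ 2)).sub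
    ((hL.pow 2).const_mul γ)).congr_deriv (by ring)

theorem hasDerivAt_energyMomentumForm_vy :
    HasDerivAt (fun t => energyMomentumForm α β γ x y vx t)
      (2 * β * vy + 2 * γ * x * (vx * y - vy * x)) vy := by
  have hL : HasDerivAt (fun t => vx * y - t * x) (-x) vy := by
    simpa using ((hasDerivAt_id vy).mul_const x).const_sub (vx * y)
  exact ((((hasDerivAt_pow 2 vy).const_mul β).const_add (α * vx ^ 2)).sub
    ((hL.pow 2).const_mul γ)).congr_deriv (by ring)

end

theorem poissonBracket_energyMomentumForm (α₁ β₁ γ₁ α₂ β₂ γ₂ x y vx vy : ℝ) :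
    poissonBracket (energyMomentumForm α₁ β₁ γ₁) (energyMomentumForm α₂ β₂ γ₂) x y vx vy =
      4 * vx * vy * (vx * y - vy * x) * (γ₁ * (α₂ - β₂) - γ₂ * (α₁ - β₁)) := by
  simp only [poissonBracket,
    (hasDerivAt_energyMomentumForm_x ..).deriv, (hasDerivAt_energyMomentumForm_y ..).deriv,
    (hasDerivAt_energyMomentumForm_vx ..).deriv, (hasDerivAt_energyMomentumForm_vy ..).deriv]
  ring

theorem Kfun_eq_energyMomentumForm (a b lam : ℝ) :
    Kfun a b lam = energyMomentumForm (a - lam)⁻¹ (b - lam)⁻¹ ((a - lam) * (b - lam))⁻¹ := by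
  ext x y vx vy
  simp only [Kfun, energyMomentumForm, div_eq_inv_mul]

theorem inv_sub_inv_eq_mul_inv_mul {a b lam : ℝ} (ha : lam ≠ a) (hb : lam ≠ b) :
    (a - lam)⁻¹ - (b - lam)⁻¹ = (b - a) * ((a - lam) * (b - lam))⁻¹ := by
  have : a - lam ≠ 0 := sub_ne_zero.mpr ha.symm
  have : b - lam ≠ 0 := sub_ne_zero.mpr hb.symm
  field_simp
  ring

theorem poisson_commute_K_general
    (a b : ℝ)
    (lam1 lam2 : ℝ) (h1a : lam1 ≠ a) (h1b : lam1 ≠ b) (h2a : lam2 ≠ a) (h2b : lam2 ≠ b)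
    (x y vx vy : ℝ) :
    poissonBracket (Kfun a b lam1) (Kfun a b lam2) x y vx vy = 0 := by
  rw [Kfun_eq_energyMomentumForm, Kfun_eq_energyMomentumForm,
    poissonBracket_energyMomentumForm,
    inv_sub_inv_eq_mul_inv_mul h1a h1b, inv_sub_inv_eq_mul_inv_mul h2a h2b]
  ring

theorem poisson_commute_K
    (a b : ℝ) (ha : a > b) (hb : b > 0)
    (lam1 lam2 : ℝ) (h1a : lam1 ≠ a) (h1b : lam1 ≠ b) (h2a : lam2 ≠ a) (h2b : lam2 ≠ b)
    (x y vx vy : ℝ) :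
    poissonBracket (Kfun a b lam1) (Kfun a b lam2) x y vx vy = 0 :=
  poisson_commute_K_general a b lam1 lam2 h1a h1b h2a h2b x y vx vy
end

section
/- Let a > b > 0 and 0 < α₀ < b be real constants. Suppose (x, y, ẋ, ẏ) ∈ ℝ⁴ is such that the line through (x, y) with direction (ẋ, ẏ) is tangent to the ellipse C_{α₀} : X²/(a−α₀) + Y²/(b−α₀) = 1, i.e. (a−α₀)ẏ² + (b−α₀)ẋ² = (xẏ − yẋ)². Then for every λ ∈ ℝ \ {a, b}, K_λ(x, y, ẋ, ẏ) = ((α₀ − λ)/((a−λ)(b−λ))) · s², where s² = ẋ² + ẏ². -/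
theorem K_value_on_tangent_lines
    (a b alpha0 : ℝ) (hab : a > b) (hb : b > 0) (h0 : 0 < alpha0) (hα : alpha0 < b)
    (x y vx vy : ℝ)
    (htangent : (a - alpha0) * vy ^ 2 + (b - alpha0) * vx ^ 2 = (x * vy - y * vx) ^ 2) :
    ∀ lam : ℝ, lam ≠ a → lam ≠ b →
      Kfun a b lam x y vx vy =
        ((alpha0 - lam) / ((a - lam) * (b - lam))) * (vx ^ 2 + vy ^ 2) := by
  intro lam ha' hb'
  have h1 : a - lam ≠ 0 := sub_ne_zero.mpr (fun h => ha' h.symm)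
  have h2 : b - lam ≠ 0 := sub_ne_zero.mpr (fun h => hb' h.symm)
  unfold Kfun
  field_simp
  nlinarith [htangent, sq_nonneg (x*vy - y*vx)]
end

section
/- Let a > b > 0 be real constants, μ ∈ ℝ \ {a, b}, and let (x, y) ∈ ℝ² be a point of the conic C_μ : x²/(a−μ) + y²/(b−μ) = 1. Let n = (x/(a−μ), y/(b−μ)) be the normal vector to C_μ at (x, y) (note n ≠ 0), and for a velocity v = (ẋ, ẏ) ∈ ℝ² let v' = v − 2(⟨v, n⟩/⟨n, n⟩)·n be the billiard reflection of v off C_μ at (x, y). Then for every λ ∈ ℝ \ {a, b}, K_λ(x, y, v') = K_λ(x, y, v). Consequently each K_λ is a first integral of the billiard motion in any domain whose boundary is composed of arcs of conics confocal with the family C_λ. -/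
/-- The billiard reflection of a velocity `v` off the conic `C_μ` at the point `(x, y)`:
the component of `v` along the normal `n = (x/(a−μ), y/(b−μ))` is reversed. -/
noncomputable def billiardReflect (a b mu : ℝ) (x y : ℝ) (v : ℝ × ℝ) : ℝ × ℝ :=
  let n : ℝ × ℝ := (x / (a - mu), y / (b - mu))
  v - (2 * ((v.1 * n.1 + v.2 * n.2) / (n.1 * n.1 + n.2 * n.2))) • n


/-!
`K_λ(v)` is `B(v, v)` for a symmetric bilinear form `B` depending on the point `(x, y)`, and a
reflection `v ↦ v - 2 (⟨v, n⟩ / ⟨n, n⟩) n` preserves `B(v, v)` as soon as `n` is an eigenvector of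
`B`, i.e. `B(·, n)` is a multiple of `⟨·, n⟩`. The normal `n` to a conic confocal with the family at
`(x, y)` satisfies `⟨(x, y), n⟩ = 1` and `n₁ y - n₂ x = (b - a) n₁ n₂`, and these two relations are
exactly what makes it an eigenvector of `B` for every `λ`.
-/

namespace LinearMap.BilinForm

variable {K M : Type*} [Field K] [AddCommGroup M] [Module K M] {B : LinearMap.BilinForm K M}

theorem IsSymm.apply_sub_smul_sub_smul (hB : B.IsSymm) (v n : M) (s : K) :
    B (v - s • n) (v - s • n) = B v v - 2 * s * B v n + s ^ 2 * B n n := by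
  simp only [map_sub, map_smul, LinearMap.sub_apply, LinearMap.smul_apply, smul_eq_mul, hB.eq n v]
  ring

/-- When `ip n = 0` the division gives `0` and the "reflection" is the identity. -/
theorem IsSymm.apply_reflection_self (hB : B.IsSymm) {n : M}
    {ip : M → K} {κ : K} (hn : ∀ v, B v n = κ * ip v) (v : M) :
    B (v - (2 * (ip v / ip n)) • n) (v - (2 * (ip v / ip n)) • n) = B v v := by
  rw [hB.apply_sub_smul_sub_smul, hn v, hn n]
  rcases eq_or_ne (ip n) 0 with h | h
  · simp [h]
  · field_simp
    ring

end LinearMap.BilinForm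

noncomputable def Kform (a b lam x y : ℝ) : LinearMap.BilinForm ℝ (ℝ × ℝ) :=
  LinearMap.mk₂ ℝ
    (fun u v => u.1 * v.1 / (a - lam) + u.2 * v.2 / (b - lam) -
      (u.1 * y - u.2 * x) * (v.1 * y - v.2 * x) / ((a - lam) * (b - lam)))
    (by intros; simp only [Prod.fst_add, Prod.snd_add]; ring)
    (by intros; simp only [Prod.smul_fst, Prod.smul_snd, smul_eq_mul]; ring)
    (by intros; simp only [Prod.fst_add, Prod.snd_add]; ring)
    (by intros; simp only [Prod.smul_fst, Prod.smul_snd, smul_eq_mul]; ring)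

theorem Kform_apply (a b lam x y : ℝ) (u v : ℝ × ℝ) :
    Kform a b lam x y u v = u.1 * v.1 / (a - lam) + u.2 * v.2 / (b - lam) -
      (u.1 * y - u.2 * x) * (v.1 * y - v.2 * x) / ((a - lam) * (b - lam)) :=
  rfl

theorem Kform_isSymm (a b lam x y : ℝ) : (Kform a b lam x y).IsSymm :=
  ⟨fun u v => by simp only [Kform_apply]; ring⟩

theorem Kfun_eq_Kform (a b lam x y : ℝ) (v : ℝ × ℝ) :
    Kfun a b lam x y v.1 v.2 = Kform a b lam x y v v := by
  rw [Kform_apply, Kfun]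
  ring

theorem Kform_apply_normal {a b lam x y : ℝ} (ha : lam ≠ a) (hb : lam ≠ b) {n : ℝ × ℝ}
    (hdot : x * n.1 + y * n.2 = 1) (hcross : n.1 * y - n.2 * x = (b - a) * (n.1 * n.2))
    (v : ℝ × ℝ) :
    Kform a b lam x y v n =
      (b - lam - (b - a) * y * n.2) / ((a - lam) * (b - lam)) * (v.1 * n.1 + v.2 * n.2) := by
  have ha' : a - lam ≠ 0 := sub_ne_zero.2 ha.symm
  have hb' : b - lam ≠ 0 := sub_ne_zero.2 hb.symm
  rw [Kform_apply]
  field_simp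
  linear_combination (v.2 * x - v.1 * y) * hcross + (b - a) * v.2 * n.2 * hdot

theorem K_invariant_under_reflection_general
    (a b : ℝ)
    (mu : ℝ) (hmua : mu ≠ a) (hmub : mu ≠ b)
    (x y : ℝ) (hconic : x ^ 2 / (a - mu) + y ^ 2 / (b - mu) = 1)
    (v : ℝ × ℝ) :
    ∀ lam : ℝ, lam ≠ a → lam ≠ b →
      Kfun a b lam x y (billiardReflect a b mu x y v).1 (billiardReflect a b mu x y v).2 =
        Kfun a b lam x y v.1 v.2 := by
  intro lam hla hlb
  set n : ℝ × ℝ := (x / (a - mu), y / (b - mu)) with hn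
  have hdot : x * n.1 + y * n.2 = 1 := by
    rw [← hconic]
    ring
  have hcross : n.1 * y - n.2 * x = (b - a) * (n.1 * n.2) := by
    have ha : a - mu ≠ 0 := sub_ne_zero.2 hmua.symm
    have hb : b - mu ≠ 0 := sub_ne_zero.2 hmub.symm
    simp only [hn]
    field_simp
    ring
  rw [Kfun_eq_Kform, Kfun_eq_Kform]
  exact (Kform_isSymm a b lam x y).apply_reflection_self
    (Kform_apply_normal hla hlb hdot hcross) v

theorem K_invariant_under_reflection
    (a b : ℝ) (hab : a > b) (hb : b > 0)
    (mu : ℝ) (hmua : mu ≠ a) (hmub : mu ≠ b)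
    (x y : ℝ) (hconic : x ^ 2 / (a - mu) + y ^ 2 / (b - mu) = 1)
    (v : ℝ × ℝ) :
    ∀ lam : ℝ, lam ≠ a → lam ≠ b →
      Kfun a b lam x y (billiardReflect a b mu x y v).1 (billiardReflect a b mu x y v).2 =
        Kfun a b lam x y v.1 v.2 :=
  K_invariant_under_reflection_general a b mu hmua hmub x y hconic v
end

section
/- Let f be a billiard-like interval exchange transformation of I = [−1, 1). If f satisfies the modified Keane condition, then f has no periodic points: for every x ∈ I and every integer m ≥ 1, f^m(x) ≠ x. -/
/-- An interval exchange transformation of `I = [−1, 1)`: a bijection `f` of `I` together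
with a finite partition of `I` into `d ≥ 2` intervals, closed on the left and open on the
right, with left endpoints `p 0 = −1 < p 1 < … < p (d−1) < 1`, such that the restriction
of `f` to each interval of the partition is a translation. -/
structure IntervalExchange where
  d : ℕ
  two_le : 2 ≤ d
  p : Fin d → ℝ
  mono : StrictMono p
  first : ∀ h : 0 < d, p ⟨0, h⟩ = -1
  lt_one : ∀ i, p i < 1
  f : ℝ → ℝ
  bij : Set.BijOn f (Set.Ico (-1) 1) (Set.Ico (-1) 1)
  translate : ∀ i : Fin d, ∃ t : ℝ,
    ∀ x ∈ Set.Ico (p i) (if h : (i : ℕ) + 1 < d then p ⟨(i : ℕ) + 1, h⟩ else 1),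
      f x = x + t

namespace IntervalExchange

/-- The `i`-th interval of the partition. -/
def piece (T : IntervalExchange) (i : Fin T.d) : Set ℝ :=
  Set.Ico (T.p i) (if h : (i : ℕ) + 1 < T.d then T.p ⟨(i : ℕ) + 1, h⟩ else 1)

/-- A billiard-like interval exchange transformation: `0` is one of the left endpoints,
each interval of the partition is contained either in `[−1, 0)` or in `[0, 1)`, each image
of an interval of the partition is contained either in `[−1, 0)` or in `[0, 1)`, and both
`[−1, 0)` and `[0, 1)` contain at least two intervals of the partition. -/
def BilliardLike (T : IntervalExchange) : Prop :=
  (∃ i, T.p i = 0) ∧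
  (∀ i, T.piece i ⊆ Set.Ico (-1) 0 ∨ T.piece i ⊆ Set.Ico 0 1) ∧
  (∀ i, T.f '' T.piece i ⊆ Set.Ico (-1) 0 ∨ T.f '' T.piece i ⊆ Set.Ico 0 1) ∧
  (∃ i j : Fin T.d, i ≠ j ∧ T.piece i ⊆ Set.Ico (-1) 0 ∧ T.piece j ⊆ Set.Ico (-1) 0) ∧
  (∃ i j : Fin T.d, i ≠ j ∧ T.piece i ⊆ Set.Ico 0 1 ∧ T.piece j ⊆ Set.Ico 0 1)

/-- The modified Keane condition: no iterate of a left endpoint of the partition hits a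
left endpoint other than `−1` and `0`. -/
def ModifiedKeane (T : IntervalExchange) : Prop :=
  ∀ m : ℕ, 1 ≤ m → ∀ i j : Fin T.d, T.p j ≠ -1 → T.p j ≠ 0 →
    T.f^[m] (T.p i) ≠ T.p j

end IntervalExchange


namespace IntervalExchange

/-- The right endpoint of the `i`-th interval. -/
def up (T : IntervalExchange) (i : Fin T.d) : ℝ :=
  if h : (i : ℕ) + 1 < T.d then T.p ⟨(i : ℕ) + 1, h⟩ else 1

variable {T : IntervalExchange}

lemma hd0 (T : IntervalExchange) : 0 < T.d := lt_of_lt_of_le two_pos T.two_le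

lemma one_lt_d (T : IntervalExchange) : 1 < T.d := lt_of_lt_of_le one_lt_two T.two_le

lemma piece_eq (i : Fin T.d) : T.piece i = Set.Ico (T.p i) (T.up i) := rfl

lemma mem_piece_iff {i : Fin T.d} {x : ℝ} : x ∈ T.piece i ↔ T.p i ≤ x ∧ x < T.up i :=
  Set.mem_Ico

lemma neg_one_le_p (i : Fin T.d) : -1 ≤ T.p i := by
  have h0 : (⟨0, T.hd0⟩ : Fin T.d) ≤ i := by simp [Fin.le_def]
  calc (-1 : ℝ) = T.p ⟨0, T.hd0⟩ := (T.first T.hd0).symm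
  _ ≤ T.p i := T.mono.monotone h0

lemma p_lt_up (i : Fin T.d) : T.p i < T.up i := by
  unfold up
  split
  · exact T.mono (by simp [Fin.lt_def])
  · exact T.lt_one i

lemma up_le_one (i : Fin T.d) : T.up i ≤ 1 := by
  unfold up
  split
  · exact (T.lt_one _).le
  · exact le_refl 1

lemma p_mem_I (i : Fin T.d) : T.p i ∈ Set.Ico (-1:ℝ) 1 := ⟨neg_one_le_p i, T.lt_one i⟩

lemma p_mem_piece (i : Fin T.d) : T.p i ∈ T.piece i :=
  mem_piece_iff.mpr ⟨le_refl _, p_lt_up i⟩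

lemma piece_subset (i : Fin T.d) : T.piece i ⊆ Set.Ico (-1:ℝ) 1 := by
  intro x hx
  rcases mem_piece_iff.mp hx with ⟨h1, h2⟩
  exact ⟨(neg_one_le_p i).trans h1, lt_of_lt_of_le h2 (up_le_one i)⟩

lemma exists_piece {x : ℝ} (hx : x ∈ Set.Ico (-1:ℝ) 1) : ∃ i, x ∈ T.piece i := by
  classical
  set S : Finset (Fin T.d) := Finset.univ.filter (fun i => T.p i ≤ x) with hS
  have hne : S.Nonempty := ⟨⟨0, T.hd0⟩, by simp [hS, T.first T.hd0, hx.1]⟩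
  set i := S.max' hne with hi
  have hile : T.p i ≤ x := by
    have hmem := S.max'_mem hne
    exact (Finset.mem_filter.mp hmem).2
  refine ⟨i, mem_piece_iff.mpr ⟨hile, ?_⟩⟩
  unfold up
  split_ifs with h
  · by_contra hle
    push_neg at hle
    have hmem : (⟨(i:ℕ)+1, h⟩ : Fin T.d) ∈ S := by simp [hS, hle]
    have hle2 := S.le_max' _ hmem
    rw [← hi] at hle2
    have : (i:ℕ) + 1 ≤ (i:ℕ) := hle2
    omega
  · exact hx.2

lemma f_apply {i : Fin T.d} {x : ℝ} (hx : x ∈ T.piece i) :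
    T.f x = x + (T.f (T.p i) - T.p i) := by
  obtain ⟨t, ht⟩ := T.translate i
  have h1 := ht x hx
  have h2 := ht (T.p i) (p_mem_piece i)
  rw [h1, h2]; ring

lemma piece_disjoint_lt {i j : Fin T.d} (h : i < j) {x : ℝ}
    (hxi : x ∈ T.piece i) (hxj : x ∈ T.piece j) : False := by
  have hvlt : (i:ℕ) < (j:ℕ) := h
  have h1 : (i:ℕ)+1 < T.d := by have := j.isLt; omega
  have h2 : T.up i ≤ T.p j := by
    rw [show T.up i = T.p ⟨(i:ℕ)+1, h1⟩ from dif_pos h1]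
    exact T.mono.monotone (by rw [Fin.le_def]; simpa using hvlt)
  rcases mem_piece_iff.mp hxi with ⟨_, hi2⟩
  rcases mem_piece_iff.mp hxj with ⟨hj1, _⟩
  linarith

lemma piece_disjoint {i j : Fin T.d} (hij : i ≠ j) {x : ℝ}
    (hxi : x ∈ T.piece i) (hxj : x ∈ T.piece j) : False := by
  rcases lt_or_gt_of_ne hij with h | h
  · exact piece_disjoint_lt h hxi hxj
  · exact piece_disjoint_lt h hxj hxi

lemma iterate_mem (k : ℕ) {x : ℝ} (hx : x ∈ Set.Ico (-1:ℝ) 1) :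
    T.f^[k] x ∈ Set.Ico (-1:ℝ) 1 := by
  induction k with
  | zero => simpa
  | succ n ih => rw [Function.iterate_succ_apply']; exact T.bij.mapsTo ih

lemma exists_tile_at (hBL : T.BilliardLike) {u : ℝ} (hu : u ∈ Set.Ico (-1:ℝ) 1)
    (hcase : u = -1 ∨ u = 0) : ∃ i, T.f (T.p i) = u := by
  obtain ⟨w, hw, hfw⟩ := T.bij.surjOn hu
  obtain ⟨i, hwi⟩ := exists_piece hw
  have e1 := f_apply hwi
  have e2 : T.p i ≤ w := (mem_piece_iff.mp hwi).1
  have hle : T.f (T.p i) ≤ u := by rw [← hfw, e1]; linarith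
  have him := hBL.2.2.1 i
  have hpmem : T.f (T.p i) ∈ T.f '' T.piece i := ⟨_, p_mem_piece i, rfl⟩
  have humem : u ∈ T.f '' T.piece i := ⟨w, hwi, hfw⟩
  refine ⟨i, le_antisymm hle ?_⟩
  rcases hcase with rfl | rfl
  · rcases him with h | h
    · exact (h hpmem).1
    · exact absurd (h humem).1 (by norm_num)
  · rcases him with h | h
    · exact absurd (h humem).2 (lt_irrefl 0)
    · exact (h hpmem).1

lemma exists_tile_at' (hBL : T.BilliardLike) {i₁ : Fin T.d} {lo hi u : ℝ}
    (hhalf : (lo = -1 ∧ hi = 0) ∨ (lo = 0 ∧ hi = 1))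
    (hu1 : lo ≤ u) (hu2 : u < hi)
    (hP : Set.Ico lo u ⊆ T.f '' T.piece i₁)
    (hnot : u ∉ T.f '' T.piece i₁) :
    ∃ i, T.f (T.p i) = u := by
  have huI : u ∈ Set.Ico (-1:ℝ) 1 := by
    rcases hhalf with ⟨rfl, rfl⟩ | ⟨rfl, rfl⟩
    · exact ⟨hu1, by linarith⟩
    · exact ⟨by linarith, hu2⟩
  obtain ⟨w, hw, hfw⟩ := T.bij.surjOn huI
  obtain ⟨i, hwi⟩ := exists_piece hw
  have humem : u ∈ T.f '' T.piece i := ⟨w, hwi, hfw⟩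
  have hine : i ≠ i₁ := by rintro rfl; exact hnot humem
  have e1 := f_apply hwi
  have e2 : T.p i ≤ w := (mem_piece_iff.mp hwi).1
  have hle : T.f (T.p i) ≤ u := by rw [← hfw, e1]; linarith
  have him := hBL.2.2.1 i
  have hpmem : T.f (T.p i) ∈ T.f '' T.piece i := ⟨_, p_mem_piece i, rfl⟩
  have hgelo : lo ≤ T.f (T.p i) := by
    rcases hhalf with ⟨rfl, rfl⟩ | ⟨rfl, rfl⟩
    · rcases him with h | h
      · exact (h hpmem).1
      · exact absurd (h humem).1 (by linarith)
    · rcases him with h | h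
      · exact absurd (h humem).2 (by linarith)
      · exact (h hpmem).1
  refine ⟨i, le_antisymm hle ?_⟩
  by_contra hlt
  push_neg at hlt
  obtain ⟨w', hw', hfw'⟩ := hP ⟨hgelo, hlt⟩
  have hweq : w' = T.p i :=
    T.bij.injOn ((piece_subset i₁) hw') (p_mem_I i) hfw'
  rw [hweq] at hw'
  exact piece_disjoint hine (p_mem_piece i) hw'

lemma succ_interior (hBL : T.BilliardLike) {i₀ : Fin T.d} (hi₀ : T.p i₀ = 0) :
    ∃ h1 : (i₀:ℕ)+1 < T.d, 0 < T.p ⟨(i₀:ℕ)+1, h1⟩ ∧ T.p ⟨(i₀:ℕ)+1, h1⟩ < 1 := by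
  obtain ⟨i, j, hij, hi, hj⟩ := hBL.2.2.2.2
  have hpi : T.p i ∈ Set.Ico (0:ℝ) 1 := hi (p_mem_piece i)
  have hpj : T.p j ∈ Set.Ico (0:ℝ) 1 := hj (p_mem_piece j)
  have hne : T.p i ≠ T.p j := fun h => hij (T.mono.injective h)
  have hex : ∃ k : Fin T.d, 0 < T.p k := by
    rcases lt_or_ge 0 (T.p i) with h | h
    · exact ⟨i, h⟩
    · refine ⟨j, lt_of_le_of_ne hpj.1 ?_⟩
      intro h2
      apply hne
      have h3 : (0:ℝ) ≤ T.p i := hpi.1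
      have h4 : T.p i ≤ 0 := h
      rw [← h2]
      linarith
  obtain ⟨k, hk⟩ := hex
  have hik : i₀ < k := by
    rw [← T.mono.lt_iff_lt]
    rw [hi₀]; exact hk
  have hvlt : (i₀:ℕ) < (k:ℕ) := hik
  have h1 : (i₀:ℕ)+1 < T.d := by have := k.isLt; omega
  refine ⟨h1, ?_, T.lt_one _⟩
  have hlt : i₀ < (⟨(i₀:ℕ)+1, h1⟩ : Fin T.d) := by simp [Fin.lt_def]
  have := T.mono hlt
  rw [hi₀] at this
  exact this

lemma snd_interior (hBL : T.BilliardLike) :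
    -1 < T.p ⟨1, T.one_lt_d⟩ ∧ T.p ⟨1, T.one_lt_d⟩ < 0 := by
  constructor
  · have h := T.mono (show (⟨0, T.hd0⟩ : Fin T.d) < ⟨1, T.one_lt_d⟩ by simp [Fin.lt_def])
    rw [T.first T.hd0] at h
    exact h
  · obtain ⟨i, j, hij, hi, hj⟩ := hBL.2.2.2.1
    have hpi : T.p i ∈ Set.Ico (-1:ℝ) 0 := hi (p_mem_piece i)
    have hpj : T.p j ∈ Set.Ico (-1:ℝ) 0 := hj (p_mem_piece j)
    have hex : ∃ k : Fin T.d, 1 ≤ (k:ℕ) ∧ T.p k < 0 := by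
      rcases Nat.eq_zero_or_pos (i:ℕ) with h | h
      · have : (j:ℕ) ≠ (i:ℕ) := fun hh => hij (Fin.ext hh.symm)
        exact ⟨j, by omega, hpj.2⟩
      · exact ⟨i, h, hpi.2⟩
    obtain ⟨k, hk1, hk2⟩ := hex
    have hle : T.p ⟨1, T.one_lt_d⟩ ≤ T.p k := by
      apply T.mono.monotone
      rw [Fin.le_def]
      simpa using hk1
    linarith

lemma right_translate (m : ℕ) {y : ℝ} (hy : y ∈ Set.Ico (-1:ℝ) 1) :
    ∃ δ > 0, ∀ z, y ≤ z → z < y + δ → ∀ k ≤ m, T.f^[k] z = T.f^[k] y + (z - y) := by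
  induction m with
  | zero =>
    refine ⟨1, one_pos, ?_⟩
    intro z _ _ k hk
    rw [Nat.le_zero.mp hk]
    simp
  | succ n ih =>
    obtain ⟨δ, hδ, hRT⟩ := ih
    obtain ⟨i, hi⟩ := exists_piece (iterate_mem n hy)
    rcases mem_piece_iff.mp hi with ⟨hi1, hi2⟩
    refine ⟨min δ (T.up i - T.f^[n] y), lt_min hδ (by linarith), ?_⟩
    intro z hz1 hz2 k hk
    have hz2a : z < y + δ := lt_of_lt_of_le hz2 (by
      have := min_le_left δ (T.up i - T.f^[n] y); linarith)
    have hz2b : z - y < T.up i - T.f^[n] y := by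
      have := min_le_right δ (T.up i - T.f^[n] y); linarith
    rcases Nat.lt_succ_iff_lt_or_eq.mp (Nat.lt_succ_of_le hk) with hkn | hkn
    · exact hRT z hz1 hz2a k (Nat.lt_succ_iff.mp hkn)
    · subst hkn
      have hzn := hRT z hz1 hz2a n le_rfl
      have hmem : T.f^[n] z ∈ T.piece i := mem_piece_iff.mpr (by
        constructor <;> [skip; skip] <;> rw [hzn] <;> [linarith; linarith])
      rw [Function.iterate_succ_apply', Function.iterate_succ_apply',
        f_apply hmem, f_apply hi, hzn]
      ring

lemma left_translate (m : ℕ) {y : ℝ} (hy : y ∈ Set.Ico (-1:ℝ) 1)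
    (hnot : ∀ k < m, ∀ j, T.f^[k] y ≠ T.p j) :
    ∃ δ > 0, ∀ z, y - δ < z → z ≤ y → ∀ k ≤ m, T.f^[k] z = T.f^[k] y + (z - y) := by
  induction m with
  | zero =>
    refine ⟨1, one_pos, ?_⟩
    intro z _ _ k hk
    rw [Nat.le_zero.mp hk]
    simp
  | succ n ih =>
    obtain ⟨δ, hδ, hLT⟩ := ih (fun k hk j => hnot k (hk.trans (Nat.lt_succ_self n)) j)
    obtain ⟨i, hi⟩ := exists_piece (iterate_mem n hy)
    rcases mem_piece_iff.mp hi with ⟨hi1, hi2⟩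
    have hi1' : T.p i < T.f^[n] y :=
      lt_of_le_of_ne hi1 (fun h => hnot n (Nat.lt_succ_self n) i h.symm)
    refine ⟨min δ (T.f^[n] y - T.p i), lt_min hδ (by linarith), ?_⟩
    intro z hz1 hz2 k hk
    have hz1a : y - δ < z := lt_of_le_of_lt (by
      have := min_le_left δ (T.f^[n] y - T.p i); linarith) hz1
    have hz1b : y - (T.f^[n] y - T.p i) < z := lt_of_le_of_lt (by
      have := min_le_right δ (T.f^[n] y - T.p i); linarith) hz1
    rcases Nat.lt_succ_iff_lt_or_eq.mp (Nat.lt_succ_of_le hk) with hkn | hkn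
    · exact hLT z hz1a hz2 k (Nat.lt_succ_iff.mp hkn)
    · subst hkn
      have hzn := hLT z hz1a hz2 n le_rfl
      have hmem : T.f^[n] z ∈ T.piece i := mem_piece_iff.mpr (by
        constructor <;> rw [hzn] <;> linarith)
      rw [Function.iterate_succ_apply', Function.iterate_succ_apply',
        f_apply hmem, f_apply hi, hzn]
      ring

lemma exists_special_fixed (hMK : T.ModifiedKeane) {x : ℝ} (hx : x ∈ Set.Ico (-1:ℝ) 1)
    {m : ℕ} (hm : 1 ≤ m) (heq : T.f^[m] x = x) :
    T.f^[m] (-1) = -1 ∨ T.f^[m] 0 = 0 := by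
  classical
  set S : Set ℝ := {y | -1 ≤ y ∧ y ≤ x ∧ ∀ z, y ≤ z → z ≤ x → T.f^[m] z = z} with hS
  have hxS : x ∈ S := by
    refine ⟨hx.1, le_refl x, ?_⟩
    intro z h1 h2
    have hz : z = x := le_antisymm h2 h1
    rw [hz]; exact heq
  have hbdd : BddBelow S := ⟨-1, fun y hy => hy.1⟩
  set a := sInf S with ha
  have haS1 : -1 ≤ a := le_csInf ⟨x, hxS⟩ (fun y hy => hy.1)
  have hax : a ≤ x := csInf_le hbdd hxS
  have haI : a ∈ Set.Ico (-1:ℝ) 1 := ⟨haS1, lt_of_le_of_lt hax hx.2⟩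
  have hfixgt : ∀ z, a < z → z ≤ x → T.f^[m] z = z := by
    intro z hz1 hz2
    obtain ⟨y, hyS, hyz⟩ := exists_lt_of_csInf_lt ⟨x, hxS⟩ hz1
    exact hyS.2.2 z hyz.le hz2
  have hafix : T.f^[m] a = a := by
    rcases eq_or_lt_of_le hax with heq2 | hlt
    · rw [heq2]; exact heq
    · obtain ⟨δ, hδ, hRT⟩ := right_translate m haI
      set z := min (a + δ/2) x with hz
      have hz1 : a < z := lt_min (by linarith) hlt
      have hz2 : z ≤ x := min_le_right _ _
      have hz3 : z < a + δ := lt_of_le_of_lt (min_le_left _ _) (by linarith)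
      have h1 := hRT z hz1.le hz3 m le_rfl
      have h2 := hfixgt z hz1 hz2
      linarith
  by_cases hend : ∃ k, k < m ∧ ∃ j, T.f^[k] a = T.p j
  · obtain ⟨k, _, j, hkj⟩ := hend
    have hpfix : T.f^[m] (T.p j) = T.p j := by
      rw [← hkj, ← Function.iterate_add_apply, Nat.add_comm,
        Function.iterate_add_apply, hafix]
    by_cases h1 : T.p j = -1
    · left; rw [← h1]; exact hpfix
    by_cases h0 : T.p j = 0
    · right; rw [← h0]; exact hpfix
    · exact absurd hpfix (hMK m hm j j h1 h0)
  · push_neg at hend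
    have ham1 : a ≠ -1 := by
      intro h
      exact hend 0 hm ⟨0, T.hd0⟩ (by simp [h, T.first T.hd0])
    have hagt : -1 < a := lt_of_le_of_ne haS1 (Ne.symm ham1)
    obtain ⟨δ, hδ, hLT⟩ := left_translate m haI (fun k hk j => hend k hk j)
    set z := max (a - δ/2) ((-1 + a)/2) with hzdef
    have hz1 : z < a := max_lt (by linarith) (by linarith)
    have hz2 : a - δ < z := lt_of_lt_of_le (by linarith) (le_max_left _ _)
    have hz3 : (-1:ℝ) < z := lt_of_lt_of_le (by linarith) (le_max_right _ _)
    have hzS : z ∈ S := by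
      refine ⟨hz3.le, by linarith, ?_⟩
      intro w hw1 hw2
      rcases le_or_gt w a with hwa | hwa
      · have h1 := hLT w (by linarith) hwa m le_rfl
        rw [h1, hafix]; ring
      · exact hfixgt w hwa hw2
    have := csInf_le hbdd hzS
    linarith

lemma no_fix_zero (hBL : T.BilliardLike) (hMK : T.ModifiedKeane)
    (hf0 : T.f 0 = 0) : False := by
  obtain ⟨i₀, hi₀⟩ := hBL.1
  obtain ⟨h1, hs0, hs1⟩ := succ_interior hBL hi₀
  have hup : T.up i₀ = T.p ⟨(i₀:ℕ)+1, h1⟩ := dif_pos h1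
  have hid : ∀ x ∈ T.piece i₀, T.f x = x := by
    intro x hx
    rw [f_apply hx, hi₀, hf0]; ring
  have himg : Set.Ico (0:ℝ) (T.p ⟨(i₀:ℕ)+1, h1⟩) ⊆ T.f '' T.piece i₀ := by
    intro z hz
    have hzp : z ∈ T.piece i₀ := mem_piece_iff.mpr (by rw [hi₀, hup]; exact hz)
    exact ⟨z, hzp, hid z hzp⟩
  have hnot : T.p ⟨(i₀:ℕ)+1, h1⟩ ∉ T.f '' T.piece i₀ := by
    rintro ⟨w, hw, hfw⟩
    rw [hid w hw] at hfw
    have := (mem_piece_iff.mp hw).2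
    rw [hup, hfw] at this
    exact lt_irrefl _ this
  obtain ⟨i, hi⟩ := exists_tile_at' hBL (Or.inr ⟨rfl, rfl⟩) hs0.le hs1 himg hnot
  exact hMK 1 le_rfl i ⟨(i₀:ℕ)+1, h1⟩ (by linarith) (by linarith)
    (by rw [Function.iterate_one]; exact hi)

lemma no_fix_negone (hBL : T.BilliardLike) (hMK : T.ModifiedKeane)
    (hf : T.f (-1) = -1) : False := by
  obtain ⟨hp1a, hp1b⟩ := snd_interior hBL
  have hp0 : T.p ⟨0, T.hd0⟩ = -1 := T.first T.hd0
  have h01 : ((⟨0, T.hd0⟩ : Fin T.d) : ℕ) + 1 < T.d := by simpa using T.one_lt_d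
  have hup : T.up ⟨0, T.hd0⟩ = T.p ⟨1, T.one_lt_d⟩ := by
    rw [show T.up ⟨0, T.hd0⟩ = T.p ⟨((⟨0, T.hd0⟩ : Fin T.d) : ℕ) + 1, h01⟩ from dif_pos h01]
  have hid : ∀ x ∈ T.piece ⟨0, T.hd0⟩, T.f x = x := by
    intro x hx
    rw [f_apply hx, hp0, hf]; ring
  have himg : Set.Ico (-1:ℝ) (T.p ⟨1, T.one_lt_d⟩) ⊆ T.f '' T.piece ⟨0, T.hd0⟩ := by
    intro z hz
    have hzp : z ∈ T.piece ⟨0, T.hd0⟩ := mem_piece_iff.mpr (by rw [hp0, hup]; exact hz)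
    exact ⟨z, hzp, hid z hzp⟩
  have hnot : T.p ⟨1, T.one_lt_d⟩ ∉ T.f '' T.piece ⟨0, T.hd0⟩ := by
    rintro ⟨w, hw, hfw⟩
    rw [hid w hw] at hfw
    have := (mem_piece_iff.mp hw).2
    rw [hup, hfw] at this
    exact lt_irrefl _ this
  obtain ⟨i, hi⟩ := exists_tile_at' hBL (Or.inl ⟨rfl, rfl⟩) hp1a.le hp1b himg hnot
  exact hMK 1 le_rfl i ⟨1, T.one_lt_d⟩ (by linarith) (by linarith)
    (by rw [Function.iterate_one]; exact hi)

lemma no_swap (hBL : T.BilliardLike) (hMK : T.ModifiedKeane)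
    (hfneg : T.f (-1) = 0) (hf0 : T.f 0 = -1) : False := by
  obtain ⟨i₀, hi₀⟩ := hBL.1
  obtain ⟨h1, hs0, hs1⟩ := succ_interior hBL hi₀
  have hupi₀ : T.up i₀ = T.p ⟨(i₀:ℕ)+1, h1⟩ := dif_pos h1
  obtain ⟨hp1a, hp1b⟩ := snd_interior hBL
  have hp0 : T.p ⟨0, T.hd0⟩ = -1 := T.first T.hd0
  have h01 : ((⟨0, T.hd0⟩ : Fin T.d) : ℕ) + 1 < T.d := by simpa using T.one_lt_d
  have hup0 : T.up ⟨0, T.hd0⟩ = T.p ⟨1, T.one_lt_d⟩ := by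
    rw [show T.up ⟨0, T.hd0⟩ = T.p ⟨((⟨0, T.hd0⟩ : Fin T.d) : ℕ) + 1, h01⟩ from dif_pos h01]
  have hiter2 : ∀ x : ℝ, T.f^[2] x = T.f (T.f x) := by
    intro x
    rw [show (2:ℕ) = 1 + 1 from rfl, Function.iterate_add_apply, Function.iterate_one]
  have hfP1 : ∀ x ∈ T.piece ⟨0, T.hd0⟩, T.f x = x + 1 := by
    intro x hx
    rw [f_apply hx, hp0, hfneg]; ring
  have hfP0 : ∀ x ∈ T.piece i₀, T.f x = x - 1 := by
    intro x hx
    rw [f_apply hx, hi₀, hf0]; ring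
  have hmemP1 : ∀ z : ℝ, -1 ≤ z → z < T.p ⟨1, T.one_lt_d⟩ → z ∈ T.piece ⟨0, T.hd0⟩ := by
    intro z hz1 hz2
    exact mem_piece_iff.mpr (by rw [hp0, hup0]; exact ⟨hz1, hz2⟩)
  have hmemP0 : ∀ z : ℝ, 0 ≤ z → z < T.p ⟨(i₀:ℕ)+1, h1⟩ → z ∈ T.piece i₀ := by
    intro z hz1 hz2
    exact mem_piece_iff.mpr (by rw [hi₀, hupi₀]; exact ⟨hz1, hz2⟩)
  have himgP0 : ∀ u : ℝ, u ≤ T.p ⟨(i₀:ℕ)+1, h1⟩ - 1 →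
      Set.Ico (-1:ℝ) u ⊆ T.f '' T.piece i₀ := by
    intro u hu z hz
    have hz1 : z + 1 ∈ T.piece i₀ := hmemP0 _ (by linarith [hz.1]) (by
      have := hz.2; linarith)
    exact ⟨z + 1, hz1, by rw [hfP0 _ hz1]; ring⟩
  have hnotP0 : (T.p ⟨(i₀:ℕ)+1, h1⟩ - 1 : ℝ) ∉ T.f '' T.piece i₀ := by
    rintro ⟨w, hw, hfw⟩
    rw [hfP0 w hw] at hfw
    have hwlt := (mem_piece_iff.mp hw).2
    rw [hupi₀] at hwlt
    linarith
  rcases lt_trichotomy (T.p ⟨(i₀:ℕ)+1, h1⟩ - 1) (T.p ⟨1, T.one_lt_d⟩) with hc | hc | hc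
  · -- tile in the left half at u = s - 1
    obtain ⟨i, hi⟩ := exists_tile_at' hBL (Or.inl ⟨rfl, rfl⟩)
      (by linarith) (by linarith) (himgP0 _ le_rfl) hnotP0
    have hsm : T.p ⟨(i₀:ℕ)+1, h1⟩ - 1 ∈ T.piece ⟨0, T.hd0⟩ := hmemP1 _ (by linarith) hc
    have h2 : T.f^[2] (T.p i) = T.p ⟨(i₀:ℕ)+1, h1⟩ := by
      rw [hiter2, hi, hfP1 _ hsm]
      ring
    exact hMK 2 (by norm_num) i ⟨(i₀:ℕ)+1, h1⟩ (by linarith) (by linarith) h2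
  · -- s - 1 = q : tile at u = q
    have himg2 : Set.Ico (-1:ℝ) (T.p ⟨1, T.one_lt_d⟩) ⊆ T.f '' T.piece i₀ := by
      rw [← hc]; exact himgP0 _ le_rfl
    have hnot2 : T.p ⟨1, T.one_lt_d⟩ ∉ T.f '' T.piece i₀ := by
      rw [← hc]; exact hnotP0
    obtain ⟨i, hi⟩ := exists_tile_at' hBL (Or.inl ⟨rfl, rfl⟩)
      (by linarith) (by linarith) himg2 hnot2
    exact hMK 1 le_rfl i ⟨1, T.one_lt_d⟩ (by linarith) (by linarith)
      (by rw [Function.iterate_one]; exact hi)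
  · -- q < s - 1 : tile in the right half at u = q + 1
    have himg : Set.Ico (0:ℝ) (T.p ⟨1, T.one_lt_d⟩ + 1) ⊆ T.f '' T.piece ⟨0, T.hd0⟩ := by
      intro z hz
      have hz1 : z - 1 ∈ T.piece ⟨0, T.hd0⟩ := hmemP1 _ (by linarith [hz.1]) (by
        have := hz.2; linarith)
      exact ⟨z - 1, hz1, by rw [hfP1 _ hz1]; ring⟩
    have hnot : (T.p ⟨1, T.one_lt_d⟩ + 1 : ℝ) ∉ T.f '' T.piece ⟨0, T.hd0⟩ := by
      rintro ⟨w, hw, hfw⟩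
      rw [hfP1 w hw] at hfw
      have hwlt := (mem_piece_iff.mp hw).2
      rw [hup0] at hwlt
      linarith
    obtain ⟨i, hi⟩ := exists_tile_at' hBL (Or.inr ⟨rfl, rfl⟩)
      (by linarith) (by linarith) himg hnot
    have hsm : T.p ⟨1, T.one_lt_d⟩ + 1 ∈ T.piece i₀ := hmemP0 _ (by linarith) (by linarith)
    have h2 : T.f^[2] (T.p i) = T.p ⟨1, T.one_lt_d⟩ := by
      rw [hiter2, hi, hfP0 _ hsm]
      ring
    exact hMK 2 (by norm_num) i ⟨1, T.one_lt_d⟩ (by linarith) (by linarith) h2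

end IntervalExchange

theorem modifiedKeane_no_periodic_points
    (T : IntervalExchange) (hBL : T.BilliardLike) (hMK : T.ModifiedKeane) :
    ∀ x ∈ Set.Ico (-1 : ℝ) 1, ∀ m : ℕ, 1 ≤ m → T.f^[m] x ≠ x := by
  intro x hx m hm heq
  have key := IntervalExchange.exists_special_fixed hMK hx hm heq
  have hI0 : (0:ℝ) ∈ Set.Ico (-1:ℝ) 1 := by norm_num
  have hIneg : (-1:ℝ) ∈ Set.Ico (-1:ℝ) 1 := by norm_num
  obtain ⟨ia, hia⟩ := IntervalExchange.exists_tile_at hBL hI0 (Or.inr rfl)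
  obtain ⟨ib, hib⟩ := IntervalExchange.exists_tile_at hBL hIneg (Or.inl rfl)
  obtain ⟨i₀, hi₀⟩ := hBL.1
  have hp0 : T.p ⟨0, T.hd0⟩ = -1 := T.first T.hd0
  set n := m - 1 with hn
  have hmn : m = n + 1 := by omega
  have hpred : ∀ c : ℝ, c ∈ Set.Ico (-1:ℝ) 1 → T.f^[m] c = c →
      T.f (T.f^[n] c) = c ∧ T.f^[n] c ∈ Set.Ico (-1:ℝ) 1 := by
    intro c hc hfix
    refine ⟨?_, IntervalExchange.iterate_mem n hc⟩
    rw [show T.f (T.f^[n] c) = T.f^[n+1] c from (Function.iterate_succ_apply' T.f n c).symm,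
      ← hmn]
    exact hfix
  have hKO : ∀ (i j : Fin T.d) (k : ℕ), 1 ≤ k → T.f^[k] (T.p i) = T.p j →
      T.p j = -1 ∨ T.p j = 0 := by
    intro i j k hk h
    by_contra hcon
    push_neg at hcon
    exact hMK k hk i j hcon.1 hcon.2 h
  rcases key with hneg | h0
  · -- f^[m] (-1) = -1
    obtain ⟨hq, hqI⟩ := hpred (-1) hIneg hneg
    have hqb : T.f^[n] (-1:ℝ) = T.p ib :=
      T.bij.injOn hqI (IntervalExchange.p_mem_I ib) (by rw [hq, hib])
    rcases Nat.eq_zero_or_pos n with hn0 | hn1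
    · rw [hn0, Function.iterate_zero_apply] at hq
      exact IntervalExchange.no_fix_negone hBL hMK hq
    · have hKb := hKO ⟨0, T.hd0⟩ ib n hn1 (by rw [hp0]; exact hqb)
      rcases hKb with hb | hb
      · apply IntervalExchange.no_fix_negone hBL hMK
        rw [hqb, hb] at hq
        exact hq
      · have hf0 : T.f 0 = -1 := by rw [hqb, hb] at hq; exact hq
        have h0fix : T.f^[m] (0:ℝ) = 0 := by
          have h0eq : (0:ℝ) = T.f^[n] (-1:ℝ) := by rw [hqb, hb]
          rw [h0eq, ← Function.iterate_add_apply, Nat.add_comm,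
            Function.iterate_add_apply, hneg]
        obtain ⟨hq2, hq2I⟩ := hpred 0 hI0 h0fix
        have hqa : T.f^[n] (0:ℝ) = T.p ia :=
          T.bij.injOn hq2I (IntervalExchange.p_mem_I ia) (by rw [hq2, hia])
        have hKa := hKO i₀ ia n hn1 (by rw [hi₀]; exact hqa)
        rcases hKa with haa | haa
        · apply IntervalExchange.no_swap hBL hMK ?_ hf0
          rw [hqa, haa] at hq2
          exact hq2
        · rw [hqa, haa, hf0] at hq2
          norm_num at hq2
  · -- f^[m] 0 = 0
    obtain ⟨hq, hqI⟩ := hpred 0 hI0 h0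
    have hqa : T.f^[n] (0:ℝ) = T.p ia :=
      T.bij.injOn hqI (IntervalExchange.p_mem_I ia) (by rw [hq, hia])
    rcases Nat.eq_zero_or_pos n with hn0 | hn1
    · rw [hn0, Function.iterate_zero_apply] at hq
      exact IntervalExchange.no_fix_zero hBL hMK hq
    · have hKa := hKO i₀ ia n hn1 (by rw [hi₀]; exact hqa)
      rcases hKa with haa | haa
      · -- f (-1) = 0
        have hfneg : T.f (-1) = 0 := by rw [hqa, haa] at hq; exact hq
        have hnegfix : T.f^[m] (-1:ℝ) = -1 := by
          have hnegeq : (-1:ℝ) = T.f^[n] (0:ℝ) := by rw [hqa, haa]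
          rw [hnegeq, ← Function.iterate_add_apply, Nat.add_comm,
            Function.iterate_add_apply, h0]
        obtain ⟨hq2, hq2I⟩ := hpred (-1) hIneg hnegfix
        have hqb : T.f^[n] (-1:ℝ) = T.p ib :=
          T.bij.injOn hq2I (IntervalExchange.p_mem_I ib) (by rw [hq2, hib])
        have hKb := hKO ⟨0, T.hd0⟩ ib n hn1 (by rw [hp0]; exact hqb)
        rcases hKb with hb | hb
        · rw [hqb, hb, hfneg] at hq2
          norm_num at hq2
        · apply IntervalExchange.no_swap hBL hMK hfneg
          rw [hqb, hb] at hq2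
          exact hq2
      · apply IntervalExchange.no_fix_zero hBL hMK
        rw [hqa, haa] at hq
        exact hq
end
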